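/- The J(0)-gadget (H-gadget) of measurement-based quantum computation implements the Hadamard channel: for every matrix ρ : Matrix (Fin 2) (Fin 2) ℂ, ∑_{s : ZMod 2} (X^(s.val)) * Tr₁((Pi 0 s ⊗ₖ 1) * E * (ρ ⊗ₖ P₊) * E * (Pi 0 s ⊗ₖ 1)) * (X^(s.val)) = H * ρ * H. -/

import Mathlib

open Matrix Kronecker BigOperators

/-- Pauli X matrix. -/
noncomputable def PX : Matrix (Fin 2) (Fin 2) ℂ := !![0, 1; 1, 0]

/-- Pauli Y matrix. -/
noncomputable def PY : Matrix (Fin 2) (Fin 2) ℂ := !![0, -Complex.I; Complex.I, 0]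

/-- Pauli Z matrix. -/
noncomputable def PZ : Matrix (Fin 2) (Fin 2) ℂ := !![1, 0; 0, -1]

/-- The Hadamard matrix. -/
noncomputable def Hmat : Matrix (Fin 2) (Fin 2) ℂ :=
  (1 / (Real.sqrt 2 : ℂ)) • !![1, 1; 1, -1]

/-- The controlled-Z gate. -/
noncomputable def Egate : Matrix (Fin 2 × Fin 2) (Fin 2 × Fin 2) ℂ :=
  (!![1, 0; 0, 0] : Matrix (Fin 2) (Fin 2) ℂ) ⊗ₖ (1 : Matrix (Fin 2) (Fin 2) ℂ)
    + (!![0, 0; 0, 1] : Matrix (Fin 2) (Fin 2) ℂ) ⊗ₖ PZ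

/-- The α-measurement projector in Bloch form. -/
noncomputable def Pmat (α : ℝ) (t : ZMod 2) : Matrix (Fin 2) (Fin 2) ℂ :=
  (1 / 2 : ℂ) • ((1 : Matrix (Fin 2) (Fin 2) ℂ) +
    ((-1 : ℂ)) ^ t.val • ((Real.cos α : ℂ) • PX + (Real.sin α : ℂ) • PY))

/-- The projector onto `|+⟩`. -/
noncomputable def Pplus : Matrix (Fin 2) (Fin 2) ℂ := (1 / 2 : ℂ) • !![1, 1; 1, 1]

/-- Partial trace over the first qubit. -/
noncomputable def tr1 (M : Matrix (Fin 2 × Fin 2) (Fin 2 × Fin 2) ℂ) :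
    Matrix (Fin 2) (Fin 2) ℂ :=
  Matrix.of fun i j => ∑ k : Fin 2, M (k, i) (k, j)

lemma tr1_kron (A B : Matrix (Fin 2) (Fin 2) ℂ) : tr1 (A ⊗ₖ B) = A.trace • B := by
  ext i j
  simp [tr1, Matrix.trace, Matrix.diag, Fin.sum_univ_two, add_mul]

lemma tr1_add (A B : Matrix (Fin 2 × Fin 2) (Fin 2 × Fin 2) ℂ) :
    tr1 (A + B) = tr1 A + tr1 B := by
  ext i j
  simp [tr1, Finset.sum_add_distrib]

set_option maxHeartbeats 1000000 in
/-- The `J(0)`-gadget (H-gadget) of MBQC implements the Hadamard channel. -/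
theorem H_gadget_implements_Hadamard (ρ : Matrix (Fin 2) (Fin 2) ℂ) :
    ∑ s : ZMod 2,
      (PX ^ s.val) *
        tr1 ((Pmat 0 s ⊗ₖ (1 : Matrix (Fin 2) (Fin 2) ℂ)) * Egate * (ρ ⊗ₖ Pplus) * Egate *
          (Pmat 0 s ⊗ₖ (1 : Matrix (Fin 2) (Fin 2) ℂ))) *
        (PX ^ s.val)
      = Hmat * ρ * Hmat := by
  have h2 : (Real.sqrt 2 : ℂ) * (Real.sqrt 2 : ℂ) = 2 := by
    rw [← Complex.ofReal_mul, Real.mul_self_sqrt (by norm_num)]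
    norm_num
  have hne : (Real.sqrt 2 : ℂ) ≠ 0 := by
    intro h
    rw [h, mul_zero] at h2
    norm_num at h2
  have key : ∀ s : ZMod 2,
      (Pmat 0 s ⊗ₖ (1 : Matrix (Fin 2) (Fin 2) ℂ)) * Egate * (ρ ⊗ₖ Pplus) * Egate *
          (Pmat 0 s ⊗ₖ (1 : Matrix (Fin 2) (Fin 2) ℂ)) =
        (Pmat 0 s * !![1, 0; 0, 0] * ρ * !![1, 0; 0, 0] * Pmat 0 s) ⊗ₖ (Pplus)
        + (Pmat 0 s * !![1, 0; 0, 0] * ρ * !![0, 0; 0, 1] * Pmat 0 s) ⊗ₖ (Pplus * PZ)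
        + (Pmat 0 s * !![0, 0; 0, 1] * ρ * !![1, 0; 0, 0] * Pmat 0 s) ⊗ₖ (PZ * Pplus)
        + (Pmat 0 s * !![0, 0; 0, 1] * ρ * !![0, 0; 0, 1] * Pmat 0 s) ⊗ₖ (PZ * Pplus * PZ) := by
    intro s
    rw [Egate]
    simp only [mul_add, add_mul, ← Matrix.mul_kronecker_mul, Matrix.one_mul, Matrix.mul_one, mul_one, one_mul]
    abel
  have expand : ∀ s : ZMod 2,
      tr1 ((Pmat 0 s ⊗ₖ (1 : Matrix (Fin 2) (Fin 2) ℂ)) * Egate * (ρ ⊗ₖ Pplus) * Egate *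
          (Pmat 0 s ⊗ₖ (1 : Matrix (Fin 2) (Fin 2) ℂ))) =
        (Pmat 0 s * !![1, 0; 0, 0] * ρ * !![1, 0; 0, 0] * Pmat 0 s).trace • Pplus
        + (Pmat 0 s * !![1, 0; 0, 0] * ρ * !![0, 0; 0, 1] * Pmat 0 s).trace • (Pplus * PZ)
        + (Pmat 0 s * !![0, 0; 0, 1] * ρ * !![1, 0; 0, 0] * Pmat 0 s).trace • (PZ * Pplus)
        + (Pmat 0 s * !![0, 0; 0, 1] * ρ * !![0, 0; 0, 1] * Pmat 0 s).trace • (PZ * Pplus * PZ) := by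
    intro s
    rw [key s, tr1_add, tr1_add, tr1_add, tr1_kron, tr1_kron, tr1_kron, tr1_kron]
  rw [show (Finset.univ : Finset (ZMod 2)) = {0, 1} from by decide]
  rw [Finset.sum_insert (by decide), Finset.sum_singleton]
  rw [expand 0, expand 1]
  ext i j
  simp only [Pmat, Pplus, PX, PY, PZ, Hmat, Matrix.trace, Matrix.diag, Matrix.mul_apply,
    Matrix.add_apply, Matrix.smul_apply, Matrix.one_apply, Fin.sum_univ_two, Matrix.of_apply,
    pow_zero, pow_one, Matrix.cons_val_zero, Matrix.cons_val_one, Matrix.head_cons,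
    Matrix.head_fin_const, Real.cos_zero, Real.sin_zero, ZMod.val_zero, ZMod.val_one,
    Complex.ofReal_one, Complex.ofReal_zero, one_smul, zero_smul, smul_eq_mul, Fin.isValue]
  fin_cases i <;> fin_cases j <;>
    simp only [Matrix.cons_val_zero, Matrix.cons_val_one, Matrix.head_cons, Matrix.one_apply,
      if_true, Fin.isValue, Matrix.head_fin_const, Matrix.zero_apply, Fin.zero_eta, Fin.mk_one,
        if_false, one_ne_zero, zero_ne_one, add_zero, zero_add, mul_zero, zero_mul, mul_one] <;>
    field_simp <;> ring_nf <;> simp only [show ((Real.sqrt 2 : ℂ)) ^ 2 = 2 from by rw [sq, h2]] <;> ring_nf
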